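/- Let d be a natural number that is not a perfect square, a_0 = ⌊√d⌋, and T the minimal period of the sequence of partial quotients of √d (periodic from rank 1). Let (x_n) be the complete quotients of a_0 + √d. Then there exist T-periodic sequences (u_n) and (v_n) of positive integers such that for every n ≥ 0: x_n = (u_n + √d)/v_n, u_n ≤ a_0, and v_n divides d − u_n². -/

import Mathlib

/-! Every complete quotient of `⌊√d⌋ + √d` is a reduced surd `(u + √d) / v` with `v ∣ d - u²`,
and `x ↦ (fract x)⁻¹` preserves this shape; irrationality of `√d` makes `(u, v)` unique.
From rank 1 on the complete quotients agree with those of `√d`, and an irrational number is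
determined by its partial quotients, so `x_{T+1} = x_1`. Hence `x_T - x_0` is an integer, and two
reduced surds differing by an integer coincide: `x_T = x_0`, so everything is `T`-periodic. -/

/-- The complete quotients of a real number `x`:
`cq x 0 = x` and `cq x (n+1) = 1 / (cq x n - ⌊cq x n⌋)`. -/
noncomputable def cq (x : ℝ) : ℕ → ℝ
  | 0 => x
  | n + 1 => (Int.fract (cq x n))⁻¹

/-- The partial quotients of a real number `x`: `pq x n = ⌊cq x n⌋`. -/
noncomputable def pq (x : ℝ) (n : ℕ) : ℤ := ⌊cq x n⌋

open Real

lemma cq_succ (x : ℝ) (n : ℕ) : cq x (n + 1) = (Int.fract (cq x n))⁻¹ := rfl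

lemma cq_cq (x : ℝ) (k m : ℕ) : cq (cq x k) m = cq x (k + m) := by
  induction m with
  | zero => rfl
  | succ m ih => rw [← add_assoc, cq_succ, ih, cq_succ]

lemma pq_cq (x : ℝ) (k m : ℕ) : pq (cq x k) m = pq x (k + m) := by
  rw [pq, cq_cq, pq]

lemma Irrational.fract {x : ℝ} (hx : Irrational x) : Irrational (Int.fract x) :=
  hx.sub_intCast _

lemma irrational_cq {x : ℝ} (hx : Irrational x) (n : ℕ) : Irrational (cq x n) := by
  induction n with
  | zero => exact hx
  | succ n ih => exact ih.fract.inv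

lemma cq_intCast_add (m : ℤ) (x : ℝ) {n : ℕ} (hn : 1 ≤ n) : cq (m + x) n = cq x n := by
  induction n, hn using Nat.le_induction with
  | base => rw [cq_succ, cq_succ, cq, cq, Int.fract_intCast_add]
  | succ n _ ih => rw [cq_succ, cq_succ, ih]

lemma pq_intCast_add (m : ℤ) (x : ℝ) {n : ℕ} (hn : 1 ≤ n) : pq (m + x) n = pq x n := by
  rw [pq, cq_intCast_add m x hn, pq]

lemma GenContFract.of_s_get?_of_irrational (n : ℕ) {x : ℝ} (hx : Irrational x) :
    (GenContFract.of x).s.get? n = some ⟨1, (pq x (n + 1) : ℝ)⟩ := by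
  induction n generalizing x with
  | zero => exact GenContFract.of_s_head hx.fract.ne_zero
  | succ n ih =>
    rw [GenContFract.of_s_succ]
    change (GenContFract.of (cq x 1)).s.get? n = _
    rw [ih (irrational_cq hx 1), pq_cq, add_comm 1]

lemma Irrational.eq_of_pq_eq {x y : ℝ} (hx : Irrational x) (hy : Irrational y)
    (h : ∀ n, pq x n = pq y n) : x = y := by
  have hof : GenContFract.of x = GenContFract.of y := by
    refine GenContFract.ext ?_ (Stream'.Seq.ext fun n => ?_)
    · simp only [GenContFract.of_h_eq_floor]
      exact_mod_cast h 0
    · rw [GenContFract.of_s_get?_of_irrational n hx, GenContFract.of_s_get?_of_irrational n hy,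
        h (n + 1)]
  have hconv := GenContFract.of_convergence (K := ℝ) x
  rw [hof] at hconv
  exact tendsto_nhds_unique hconv (GenContFract.of_convergence y)

lemma Irrational.cq_add_eq_of_pq_add_eq {x : ℝ} (hx : Irrational x) {k T : ℕ}
    (h : ∀ n, k ≤ n → pq x (n + T) = pq x n) : cq x (k + T) = cq x k := by
  refine (irrational_cq hx _).eq_of_pq_eq (irrational_cq hx _) fun n => ?_
  rw [pq_cq, pq_cq, add_right_comm, h _ (Nat.le_add_right k n)]

lemma cq_periodic {x : ℝ} {T : ℕ} (h : cq x T = cq x 0) : Function.Periodic (cq x) T := by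
  intro n
  induction n with
  | zero => simpa using h
  | succ n ih => rw [add_right_comm, cq_succ, cq_succ, ih]

lemma eq_and_eq_of_add_div_eq {s : ℝ} (hs : Irrational s) {u v u' v' : ℤ}
    (hv : 0 < v) (hv' : 0 < v') (h : (u + s) / v = (u' + s) / v') : u = u' ∧ v = v' := by
  rw [div_eq_div_iff (by positivity) (by positivity)] at h
  have hvv' : v = v' := by
    by_contra hne
    have hlin : s * ((v' - v : ℤ) : ℝ) = ((u' * v - u * v' : ℤ) : ℝ) := by
      push_cast
      linarith
    exact (hs.mul_intCast (sub_ne_zero.mpr (Ne.symm hne))).ne_int _ hlin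
  subst hvv'
  refine ⟨?_, rfl⟩
  exact_mod_cast mul_right_cancel₀ (by positivity : (v : ℝ) ≠ 0) (by linarith : (u : ℝ) * v = u' * v)

lemma dvd_sub_sq_mul_sub {R : Type*} [CommRing R] {n u v : R} (a : R) (h : v ∣ n - u ^ 2) :
    v ∣ n - (a * v - u) ^ 2 := by
  have : n - (a * v - u) ^ 2 = (n - u ^ 2) - v * (a * (a * v - 2 * u)) := by ring
  rw [this]
  exact dvd_sub h (dvd_mul_right _ _)

/-- `x = (u + √d) / v` is a reduced quadratic surd in normalised form: `x > 1` and its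
conjugate `(u - √d) / v` lies in `(-1, 0)`. -/
structure IsReducedSurdRep (d : ℕ) (x : ℝ) (u v : ℤ) : Prop where
  eq : x = (u + √d) / v
  v_pos : 0 < v
  dvd : v ∣ (d : ℤ) - u ^ 2
  lt_sqrt : (u : ℝ) < √d
  sqrt_lt_add : √d < u + v
  lt_add_sqrt : (v : ℝ) < u + √d

namespace IsReducedSurdRep

variable {d : ℕ} {x : ℝ} {u v : ℤ}

lemma pos (h : IsReducedSurdRep d x u v) : 0 < u := by
  exact_mod_cast (by linarith [h.sqrt_lt_add, h.lt_add_sqrt] : (0 : ℝ) < u)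

lemma le_floor (h : IsReducedSurdRep d x u v) : u ≤ ⌊√d⌋ :=
  Int.le_floor.mpr h.lt_sqrt.le

lemma step (hd : Irrational √d) (h : IsReducedSurdRep d x u v) :
    IsReducedSurdRep d (Int.fract x)⁻¹ (⌊x⌋ * v - u) (((d : ℤ) - (⌊x⌋ * v - u) ^ 2) / v) := by
  obtain ⟨rfl, hv, hdvd, hus, hsuv, hvus⟩ := h
  set x := (u + √d) / v
  set u' := ⌊x⌋ * v - u
  set v' := ((d : ℤ) - u' ^ 2) / v
  have hvR : (0 : ℝ) < v := by exact_mod_cast hv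
  have hsd : √d ^ 2 = d := Real.sq_sqrt (Nat.cast_nonneg d)
  have hdvd' : v ∣ (d : ℤ) - u' ^ 2 := dvd_sub_sq_mul_sub _ hdvd
  have hvv' : (v : ℝ) * v' = d - u' ^ 2 := by exact_mod_cast Int.mul_ediv_cancel' hdvd'
  have ha : (1 : ℝ) ≤ ⌊x⌋ := by
    exact_mod_cast Int.le_floor.mpr (by exact_mod_cast (one_lt_div hvR).mpr hvus |>.le)
  have hu'R : (u' : ℝ) = ⌊x⌋ * v - u := by push_cast [u']; ring
  have hfract : Int.fract x = (√d - u') / v := by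
    rw [Int.fract, hu'R, show x = (u + √d) / v from rfl]
    field_simp
    ring
  have hfract_pos : 0 < Int.fract x :=
    (Int.fract_nonneg x).lt_of_ne' (hd.intCast_add u |>.div_intCast hv.ne').fract.ne_zero
  have hfract_lt : Int.fract x < 1 := Int.fract_lt_one x
  rw [hfract] at hfract_pos hfract_lt
  have hu's : 0 < √d - u' := by linarith [(div_pos_iff_of_pos_right hvR).mp hfract_pos]
  have hu'v : √d - u' < v := by linarith [(div_lt_one hvR).mp hfract_lt]
  have hvu's : (v : ℝ) < u' + √d := by nlinarith
  have hvv'' : (v : ℝ) * v' = (√d - u') * (√d + u') := by linear_combination hvv' - hsd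
  have hv'R : (0 : ℝ) < v' :=
    pos_of_mul_pos_right (hvv''.symm ▸ mul_pos hu's (by linarith)) hvR.le
  refine ⟨?_, by exact_mod_cast hv'R, ⟨v, by rw [mul_comm]; exact_mod_cast hvv'.symm⟩,
    by linarith, ?_, ?_⟩
  · rw [hfract, inv_div, div_eq_div_iff hu's.ne' hv'R.ne']
    linear_combination hvv''
  · nlinarith [mul_pos hu's (sub_pos.2 hvu's)]
  · nlinarith [mul_pos (sub_pos.2 hu'v) (by linarith : (0 : ℝ) < √d + u')]

lemma exists_cq (hd : Irrational √d) (h : IsReducedSurdRep d x u v) (n : ℕ) :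
    ∃ u' v', IsReducedSurdRep d (cq x n) u' v' := by
  induction n with
  | zero => exact ⟨u, v, h⟩
  | succ n ih =>
    obtain ⟨u', v', h'⟩ := ih
    exact ⟨_, _, h'.step hd⟩

lemma unique (hd : Irrational √d) {u' v' : ℤ} (h : IsReducedSurdRep d x u v)
    (h' : IsReducedSurdRep d x u' v') : u = u' ∧ v = v' :=
  eq_and_eq_of_add_div_eq hd h.v_pos h'.v_pos (h.eq.symm.trans h'.eq)

/-- Two reduced surds differing by an integer `k` have conjugates differing by `k` in `(-1, 0)`,
so `k = 0`. -/
lemma eq_of_fract_eq (hd : Irrational √d) {y : ℝ} {u' v' : ℤ} (h : IsReducedSurdRep d x u v)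
    (h' : IsReducedSurdRep d y u' v') (hxy : Int.fract x = Int.fract y) : x = y := by
  obtain ⟨k, hk⟩ := Int.fract_eq_fract.mp hxy
  obtain ⟨hx, hv, -, hus, hsuv, -⟩ := h
  obtain ⟨hy, hv', -, hus', hsuv', -⟩ := h'
  have hv'R : (v' : ℝ) ≠ 0 := by exact_mod_cast hv'.ne'
  have hx' : x = ((u' + k * v' : ℤ) + √d) / v' := by
    rw [sub_eq_iff_eq_add.mp hk, hy]
    push_cast
    field_simp
    ring
  obtain ⟨hu, rfl⟩ := eq_and_eq_of_add_div_eq hd hv hv' (hx.symm.trans hx')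
  have hvR : (0 : ℝ) < v := by exact_mod_cast hv
  have huR : (u : ℝ) = u' + k * v := by exact_mod_cast hu
  have hk1 : (k : ℝ) < 1 := by nlinarith
  have hk2 : -1 < (k : ℝ) := by nlinarith
  have hk0 : k = 0 := by
    have : k < 1 ∧ -1 < k := ⟨by exact_mod_cast hk1, by exact_mod_cast hk2⟩
    omega
  exact sub_eq_zero.mp (by simpa [hk0] using hk)

end IsReducedSurdRep

lemma isReducedSurdRep_floor_add_sqrt {d : ℕ} (hd : Irrational √d) :
    IsReducedSurdRep d (⌊√d⌋ + √d) ⌊√d⌋ 1 := by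
  have hd0 : d ≠ 0 := by
    rintro rfl
    exact hd.ne_int 0 (by simp)
  have hs1 : (1 : ℝ) < √d :=
    (Real.one_le_sqrt.mpr (by exact_mod_cast Nat.one_le_iff_ne_zero.mpr hd0)).lt_of_ne
      (by exact_mod_cast (hd.ne_int 1).symm)
  have hfloor : (0 : ℝ) ≤ ⌊√d⌋ := by exact_mod_cast Int.floor_nonneg.mpr (Real.sqrt_nonneg _)
  refine ⟨by simp, one_pos, one_dvd _, (Int.floor_le _).lt_of_ne (hd.ne_int _).symm, ?_, ?_⟩
  · exact_mod_cast Int.lt_floor_add_one (√d : ℝ)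
  · push_cast
    linarith

theorem stmt7_general (d : ℕ) (hd : ¬ IsSquare d)
    (T : ℕ)
    (hper : ∀ n, 1 ≤ n → pq (Real.sqrt d) (n + T) = pq (Real.sqrt d) n)
    (x : ℝ) (hx : x = (⌊Real.sqrt d⌋ : ℝ) + Real.sqrt d) :
    ∃ u v : ℕ → ℤ,
      (∀ n, 0 < u n ∧ 0 < v n) ∧
      (∀ n, u (n + T) = u n ∧ v (n + T) = v n) ∧
      (∀ n, cq x n = ((u n : ℝ) + Real.sqrt d) / (v n : ℝ) ∧
        u n ≤ ⌊Real.sqrt d⌋ ∧ v n ∣ (d : ℤ) - (u n) ^ 2) := by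
  have hs : Irrational √d := irrational_sqrt_natCast_iff.mpr hd
  have h₀ : IsReducedSurdRep d x ⌊√d⌋ 1 := hx ▸ isReducedSurdRep_floor_add_sqrt hs
  have hshift : cq x (1 + T) = cq x 1 :=
    (hx ▸ hs.intCast_add _).cq_add_eq_of_pq_add_eq fun n hn => by
      rw [hx, pq_intCast_add _ _ hn, pq_intCast_add _ _ (hn.trans (Nat.le_add_right n T))]
      exact hper n hn
  have hfract : Int.fract (cq x T) = Int.fract (cq x 0) :=
    inv_injective (by rwa [add_comm] at hshift)
  obtain ⟨uT, vT, hT⟩ := h₀.exists_cq hs T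
  have hperiodic : Function.Periodic (cq x) T := cq_periodic (hT.eq_of_fract_eq hs h₀ hfract)
  choose u v huv using h₀.exists_cq hs
  refine ⟨u, v, fun n => ⟨(huv n).pos, (huv n).v_pos⟩, fun n => ?_,
    fun n => ⟨(huv n).eq, (huv n).le_floor, (huv n).dvd⟩⟩
  exact (huv (n + T)).unique hs (hperiodic n ▸ huv n)

/-- existence of the `T`-periodic sequences `(u_n)`, `(v_n)` of
positive integers with `x_n = (u_n + √d)/v_n`, `u_n ≤ a_0 = ⌊√d⌋`, and
`v_n ∣ d - u_n²`, where `(x_n)` are the complete quotients of `⌊√d⌋ + √d`. -/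
theorem stmt7 (d : ℕ) (hd : ¬ IsSquare d)
    (T : ℕ) (hT : 1 ≤ T)
    (hper : ∀ n, 1 ≤ n → pq (Real.sqrt d) (n + T) = pq (Real.sqrt d) n)
    (hmin : ∀ T', 1 ≤ T' →
      (∀ n, 1 ≤ n → pq (Real.sqrt d) (n + T') = pq (Real.sqrt d) n) → T ≤ T')
    (x : ℝ) (hx : x = (⌊Real.sqrt d⌋ : ℝ) + Real.sqrt d) :
    ∃ u v : ℕ → ℤ,
      (∀ n, 0 < u n ∧ 0 < v n) ∧
      (∀ n, u (n + T) = u n ∧ v (n + T) = v n) ∧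
      (∀ n, cq x n = ((u n : ℝ) + Real.sqrt d) / (v n : ℝ) ∧
        u n ≤ ⌊Real.sqrt d⌋ ∧ v n ∣ (d : ℤ) - (u n) ^ 2) :=
  stmt7_general d hd T hper x hx
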